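/- arXiv:1911.06625 — 3 statements merged into one kernel-verified Lean document; each statement's English description precedes it below -/
import Mathlib

section
/- Let a be an atom of a wEMV-algebra (M; ∨, ∧, ⊕, ⊖, 0) and let b ∈ M. If there is an integer n ≥ 0 such that b ≤ n.a, then b = m.a for some integer m ≥ 0. -/
/-! Induct on `n`. For `b ≤ (n+1).a`, the element `c = b ⊖ n.a` lies below
`(n+1).a ⊖ n.a ≤ a`, so `c = 0` or `c = a` since `a` is an atom. If `c = 0` then `b ≤ n.a`.
If `c = a` then `a ≤ b` and `b ⊖ a = b ⊖ (b ⊖ n.a) = n.a ∧ b ≤ n.a`, so `b = (b ⊖ a) ⊕ a`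
with `b ⊖ a` a multiple of `a` by induction. -/

universe u

class WEMV (M : Type u) extends DistribLattice M, Zero M where
  oplus : M → M → M
  ominus : M → M → M
  zero_le : ∀ x : M, 0 ≤ x
  oplus_comm : ∀ x y : M, oplus x y = oplus y x
  oplus_assoc : ∀ x y z : M, oplus (oplus x y) z = oplus x (oplus y z)
  oplus_zero : ∀ x : M, oplus x 0 = x
  ominus_oplus_le : ∀ x y : M, ominus (oplus x y) x ≤ y
  oplus_ominus : ∀ x y : M, oplus x (ominus y x) = x ⊔ y
  ominus_inf : ∀ x y : M, ominus x (x ⊓ y) = ominus x y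
  ominus_ominus : ∀ x z : M, ominus z (ominus z x) = x ⊓ z
  ominus_sup : ∀ x y z : M, ominus z (x ⊔ y) = ominus z x ⊓ ominus z y
  inf_ominus : ∀ x y z : M, ominus (x ⊓ y) z = ominus x z ⊓ ominus y z
  ominus_oplus_assoc : ∀ x y z : M, ominus x (oplus y z) = ominus (ominus x y) z
  oplus_sup : ∀ x y z : M, oplus x (y ⊔ z) = oplus x y ⊔ oplus x z

open WEMV

def nmul {M : Type u} [WEMV M] : ℕ → M → M
  | 0, _ => 0
  | n + 1, a => oplus (nmul n a) a

namespace WEMV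

variable {M : Type u} [WEMV M]

theorem zero_oplus (x : M) : oplus 0 x = x := by
  rw [oplus_comm, oplus_zero]

theorem ominus_zero (x : M) : ominus x 0 = x := by
  have h := oplus_ominus 0 x
  rwa [zero_oplus, sup_eq_right.mpr (zero_le x)] at h

theorem ominus_le_self (x y : M) : ominus x y ≤ x := by
  have h := ominus_sup 0 y x
  rw [sup_eq_right.mpr (zero_le y), ominus_zero] at h
  exact h ▸ inf_le_left

theorem ominus_le_ominus_right {x y : M} (h : x ≤ y) (z : M) : ominus x z ≤ ominus y z := by
  have hinf := inf_ominus x y z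
  rw [inf_eq_left.mpr h] at hinf
  exact hinf ▸ inf_le_right

theorem le_of_ominus_eq_zero {x y : M} (h : ominus x y = 0) : x ≤ y := by
  have hsup := oplus_ominus y x
  rw [h, oplus_zero] at hsup
  exact le_sup_right.trans hsup.symm.le

theorem oplus_ominus_of_le {x y : M} (h : y ≤ x) : oplus y (ominus x y) = x := by
  rw [oplus_ominus, sup_eq_right.mpr h]

theorem nmul_succ_ominus_le (n : ℕ) (a : M) : ominus (nmul (n + 1) a) (nmul n a) ≤ a :=
  ominus_oplus_le _ _

theorem le_nmul_or_eq_oplus_of_le_nmul_succ {a b : M}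
    (hatom : ∀ c : M, 0 < c → c ≤ a → c = a) {n : ℕ} (hb : b ≤ nmul (n + 1) a) :
    b ≤ nmul n a ∨ b = oplus (nmul n a ⊓ b) a := by
  set c := ominus b (nmul n a) with hc
  have hc_le : c ≤ a := (ominus_le_ominus_right hb _).trans (nmul_succ_ominus_le n a)
  rcases eq_or_ne c 0 with hc0 | hc0
  · exact Or.inl (le_of_ominus_eq_zero hc0)
  · have hca : c = a := hatom c ((zero_le c).lt_of_ne hc0.symm) hc_le
    have hab : a ≤ b := hca ▸ ominus_le_self b _
    have hrest : ominus b a = nmul n a ⊓ b := by rw [← ominus_ominus (nmul n a) b, ← hc, hca]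
    right
    rw [← hrest, oplus_comm, oplus_ominus_of_le hab]

end WEMV

theorem stmt4_general {M : Type u} [WEMV M] (a b : M)
    (hatom : ∀ c : M, 0 < c → c ≤ a → c = a)
    (hbnd : ∃ n : ℕ, b ≤ nmul n a) :
    ∃ m : ℕ, b = nmul m a := by
  obtain ⟨n, hbn⟩ := hbnd
  induction n generalizing b with
  | zero => exact ⟨0, le_antisymm hbn (zero_le b)⟩
  | succ n ih =>
    rcases le_nmul_or_eq_oplus_of_le_nmul_succ hatom hbn with hle | hsplit
    · exact ih b hle
    · obtain ⟨m, hm⟩ := ih (nmul n a ⊓ b) inf_le_left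
      exact ⟨m + 1, hsplit.trans (congrArg (oplus · a) hm)⟩

theorem stmt4 {M : Type u} [WEMV M] (a b : M)
    (ha0 : a ≠ 0) (hatom : ∀ c : M, 0 < c → c ≤ a → c = a)
    (hbnd : ∃ n : ℕ, b ≤ nmul n a) :
    ∃ m : ℕ, b = nmul m a :=
  stmt4_general a b hatom hbnd
end

section
/- Let (M; ∨, ∧, ⊕, ⊖, 0) be a wEMV-algebra. Then for all x, y, z ∈ M: (x ∧ y) ⊕ z = (x ⊕ z) ∧ (y ⊕ z) and z ⊖ (x ∧ y) = (z ⊖ x) ∨ (z ⊖ y). -/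
/-! The inequality `(x ⊕ z) ∧ (y ⊕ z) ≤ (x ∧ y) ⊕ z` comes from the residuation pair
`(a ⊕ z) ⊖ z ≤ a ≤ z ⊕ (a ⊖ z)`, since `⊖ z` distributes over `∧`. The identity for `z ⊖ (x ∧ y)`
follows from `z ∧ x = z ⊖ (z ⊖ x)`, which turns the meet `z ∧ x ∧ y` into `z ⊖ ((z ⊖ x) ∨ (z ⊖ y))`,
and one more application of `z ⊖ (z ⊖ w) = w ∧ z`. -/

universe u

open WEMV

namespace WEMV

variable {M : Type u} [WEMV M]

lemma oplus_le_oplus_right {a b : M} (h : a ≤ b) (c : M) : oplus a c ≤ oplus b c := by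
  rw [oplus_comm a, oplus_comm b, ← sup_eq_right.mpr h, oplus_sup]
  exact le_sup_left

lemma inf_eq_ominus_ominus (z x : M) : z ⊓ x = ominus z (ominus z x) := by
  rw [ominus_ominus, inf_comm]

lemma ominus_le (z x : M) : ominus z x ≤ z := by
  have h : ominus z (ominus z (ominus z x)) = ominus z x ⊓ z := ominus_ominus _ _
  rw [← inf_eq_ominus_ominus z x, ominus_inf] at h
  rw [h]
  exact inf_le_right

lemma le_oplus_ominus (a z : M) : a ≤ oplus z (ominus a z) := by
  rw [oplus_ominus]
  exact le_sup_right

lemma inf_oplus (x y z : M) : oplus (x ⊓ y) z = oplus x z ⊓ oplus y z := by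
  refine le_antisymm (le_inf (oplus_le_oplus_right inf_le_left z)
    (oplus_le_oplus_right inf_le_right z)) ?_
  set a := oplus x z ⊓ oplus y z
  have ha : ominus a z ≤ x ⊓ y := by
    rw [inf_ominus, oplus_comm x, oplus_comm y]
    exact inf_le_inf (ominus_oplus_le z x) (ominus_oplus_le z y)
  calc a ≤ oplus z (ominus a z) := le_oplus_ominus a z
    _ = oplus (ominus a z) z := oplus_comm _ _
    _ ≤ oplus (x ⊓ y) z := oplus_le_oplus_right ha z

lemma ominus_inf_eq_sup (x y z : M) : ominus z (x ⊓ y) = ominus z x ⊔ ominus z y := by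
  have hmeet : z ⊓ (x ⊓ y) = ominus z (ominus z x ⊔ ominus z y) := by
    rw [ominus_sup, ← inf_eq_ominus_ominus, ← inf_eq_ominus_ominus, inf_inf_distrib_left]
  rw [← ominus_inf, hmeet, ominus_ominus]
  exact inf_eq_left.mpr (sup_le (ominus_le z x) (ominus_le z y))

end WEMV

theorem stmt6 {M : Type u} [WEMV M] (x y z : M) :
    oplus (x ⊓ y) z = oplus x z ⊓ oplus y z ∧
    ominus z (x ⊓ y) = ominus z x ⊔ ominus z y :=
  ⟨inf_oplus x y z, ominus_inf_eq_sup x y z⟩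
end

section
/- A wEMV-algebra (M; ∨, ∧, ⊕, ⊖, 0) is cancellative if and only if it satisfies the identity (x ⊕ y) ⊖ x = y for all x, y ∈ M. -/
universe u

open WEMV

/-!
Both directions compare `x ⊕ ((x ⊕ y) ⊖ x)` with `x ⊕ y`. Since `x ≤ x ⊕ y`, axiom (iv) makes
these equal, so cancelling `x` gives the identity. Conversely, the identity recovers `x` from
`x ⊕ z` as `(z ⊕ x) ⊖ z`, which is cancellation.
-/

namespace WEMV

variable {M : Type u} [WEMV M]

theorem le_self_oplus (x y : M) : x ≤ oplus x y := by
  have h := oplus_sup x 0 y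
  rw [sup_eq_right.mpr (zero_le y), oplus_zero] at h
  exact h ▸ le_sup_left

theorem oplus_ominus_oplus_self (x y : M) : oplus x (ominus (oplus x y) x) = oplus x y := by
  rw [oplus_ominus, sup_eq_right.mpr (le_self_oplus x y)]

theorem oplus_ominus_cancel_left_of_cancel
    (hc : ∀ x y z : M, oplus x z = oplus y z → x = y) (x y : M) :
    ominus (oplus x y) x = y :=
  hc _ _ x <| by rw [oplus_comm _ x, oplus_ominus_oplus_self, oplus_comm]

theorem oplus_right_cancel_of_ominus (h : ∀ x y : M, ominus (oplus x y) x = y) {x y z : M}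
    (hxy : oplus x z = oplus y z) : x = y := by
  rw [← h z x, ← h z y, oplus_comm z x, oplus_comm z y, hxy]

end WEMV

theorem stmt14 {M : Type u} [WEMV M] :
    (∀ x y z : M, oplus x z = oplus y z → x = y) ↔
    (∀ x y : M, ominus (oplus x y) x = y) :=
  ⟨oplus_ominus_cancel_left_of_cancel, fun h _ _ _ => oplus_right_cancel_of_ominus h⟩
end
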